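/- Growth rate of an endomorphism of a free product restricted to a factor: Let H be a group generated by a finite symmetric set T, let F be a free group on a finite set X, and let G = H ∗ F be their free product (coproduct of groups), with canonical inclusions inl : H → G and inr : F → G. Equip G with the finite symmetric generating set S consisting of the elements inl(t) for t ∈ T together with inr(x) and inr(x)⁻¹ for x ∈ X. If A : G → G and B : H → H are group endomorphisms with A ∘ inl = inl ∘ B, then γ_B ≤ γ_A, where the growth rates are computed with respect to T and S respectively. (This is the algebraic core of Theorem 5.2: π₁ of a compression body is the free product of π₁ of its interior boundary with a free group, and the interior boundary inclusion admits a retract.) -/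

import Mathlib

open Filter
open scoped ENNReal

/-- The word length of `g` with respect to a generating set `S`: the least `n`
such that `g` is a product of `n` elements of `S` (so the identity has length `0`). -/
noncomputable def wordLength {G : Type*} [Group G] (S : Set G) (g : G) : ℕ :=
  sInf {n : ℕ | ∃ l : List G, l.length = n ∧ (∀ x ∈ l, x ∈ S) ∧ l.prod = g}

/-- The growth rate of a group endomorphism `A : G → G` with respect to a
generating set `S`:
`γ_A = sup_{g ∈ G} limsup_{n → ∞} (1/n)·log(max(ℓ_S(Aⁿ(g)), 1))`, valued in `[0, ∞]`. -/
noncomputable def growthRate {G : Type*} [Group G] (S : Set G) (A : G →* G) : ℝ≥0∞ :=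
  ⨆ g : G, Filter.atTop.limsup fun n : ℕ =>
    ENNReal.ofReal (Real.log ((max (wordLength S ((⇑A)^[n] g)) 1 : ℕ) : ℝ) / (n : ℝ))

/-!
The retraction `Coprod.fst : H ∗ F →* H`, killing `F`, sends every generator in `S` to a
generator in `T` or to `1`. Hence it does not increase word length, and since it is a left
inverse of `inl`, `ℓ_T(h) ≤ ℓ_S(inl h)`. As `A` restricts to `B` along `inl`, the `B`-orbit
of `h` is then dominated termwise by the `A`-orbit of `inl h`.
-/

section WordLength

variable {G K : Type*} [Group G] [Group K] {S : Set G} {T : Set K}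

-- `wordLength` is an `sInf`, so it takes the junk value `0` off the generated submonoid.
lemma wordLength_eq_zero_of_notMem_closure {g : G} (hg : g ∉ Submonoid.closure S) :
    wordLength S g = 0 := by
  refine Nat.sInf_eq_zero.2 (Or.inr (Set.eq_empty_of_forall_notMem ?_))
  rintro n ⟨l, -, hl, rfl⟩
  exact hg (Submonoid.list_prod_mem _ fun x hx => Submonoid.subset_closure (hl x hx))

lemma exists_list_length_eq_wordLength {g : G} (hg : g ∈ Submonoid.closure S) :
    ∃ l : List G, l.length = wordLength S g ∧ (∀ x ∈ l, x ∈ S) ∧ l.prod = g := by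
  obtain ⟨l, hl, rfl⟩ := Submonoid.exists_list_of_mem_closure hg
  exact Nat.sInf_mem
    (s := {n | ∃ l' : List G, l'.length = n ∧ (∀ x ∈ l', x ∈ S) ∧ l'.prod = l.prod})
    ⟨l.length, l, rfl, hl, rfl⟩

lemma wordLength_prod_le_length {l : List G} (hl : ∀ x ∈ l, x ∈ S) :
    wordLength S l.prod ≤ l.length :=
  Nat.sInf_le ⟨l, rfl, hl, rfl⟩

lemma wordLength_map_le (r : G →* K) (hr : ∀ s ∈ S, r s ∈ T ∨ r s = 1) {g : G}
    (hg : g ∈ Submonoid.closure S) : wordLength T (r g) ≤ wordLength S g := by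
  classical
  obtain ⟨l, hlen, hl, rfl⟩ := exists_list_length_eq_wordLength hg
  set l' := (l.map r).filter (· != 1)
  have hl' : ∀ y ∈ l', y ∈ T := by
    intro y hy
    obtain ⟨hy, hy1⟩ := List.mem_filter.1 hy
    obtain ⟨x, hx, rfl⟩ := List.mem_map.1 hy
    exact (hr x (hl x hx)).resolve_right (by simpa using hy1)
  calc wordLength T (r l.prod) = wordLength T l'.prod := by
        rw [List.prod_filter_bne_one, map_list_prod]
    _ ≤ l'.length := wordLength_prod_le_length hl'
    _ ≤ (l.map r).length := List.length_filter_le _ _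
    _ = wordLength S l.prod := by rw [List.length_map, hlen]

lemma wordLength_le_wordLength_of_leftInverse (ι : K →* G) (r : G →* K)
    (hrι : Function.LeftInverse r ι) (hι : ι '' T ⊆ S)
    (hr : ∀ s ∈ S, r s ∈ T ∨ r s = 1) (k : K) : wordLength T k ≤ wordLength S (ι k) := by
  by_cases hk : ι k ∈ Submonoid.closure S
  · simpa only [hrι k] using wordLength_map_le r hr hk
  · have hk' : k ∉ Submonoid.closure T := fun hk' => hk <| Submonoid.closure_mono hι <| by
      rw [← MonoidHom.map_mclosure]
      exact Submonoid.mem_map_of_mem ι hk'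
    simp [wordLength_eq_zero_of_notMem_closure hk']

end WordLength

lemma growthRate_le_of_semiconj {G K : Type*} [Group G] [Group K] {S : Set G} {T : Set K}
    {A : G →* G} {B : K →* K} (ι : K →* G) (hAB : Function.Semiconj ι B A)
    (hι : ∀ k, wordLength T k ≤ wordLength S (ι k)) : growthRate T B ≤ growthRate S A := by
  refine iSup_le fun k => le_iSup_of_le (ι k) <| limsup_le_limsup <| .of_forall fun n => ?_
  have hlen := (hAB.iterate_right n k).symm ▸ hι ((⇑B)^[n] k)
  dsimp only
  gcongr

open Monoid in
theorem growthRate_le_of_freeProduct_factor_general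
    {H X : Type*} [Group H]
    (T : Set H)
    (S : Set (Coprod H (FreeGroup X)))
    (hS : S = (⇑(Coprod.inl : H →* Coprod H (FreeGroup X)) '' T) ∪
        (⋃ x : X, {Coprod.inr (FreeGroup.of x), (Coprod.inr (FreeGroup.of x) :
          Coprod H (FreeGroup X))⁻¹}))
    (A : Coprod H (FreeGroup X) →* Coprod H (FreeGroup X)) (B : H →* H)
    (hcomm : A.comp Coprod.inl = (Coprod.inl : H →* Coprod H (FreeGroup X)).comp B) :
    growthRate T B ≤ growthRate S A := by
  have hfst : ∀ s ∈ S, Coprod.fst s ∈ T ∨ Coprod.fst s = 1 := by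
    subst hS
    rintro s (⟨t, ht, rfl⟩ | hs)
    · simpa using Or.inl ht
    · obtain ⟨x, rfl | rfl⟩ : ∃ x : X, s = _ ∨ s = _ := by simpa using hs
      all_goals simp
  refine growthRate_le_of_semiconj Coprod.inl (fun h => (DFunLike.congr_fun hcomm h).symm) ?_
  exact wordLength_le_wordLength_of_leftInverse _ _ Coprod.fst_apply_inl
    (hS ▸ Set.subset_union_left) hfst

open Monoid in
/-- Growth rate of an endomorphism of a free product `G = H ∗ F` (with `F` a free
group on a finite set `X`) restricted to the factor `H`: if `A ∘ inl = inl ∘ B`,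
then `γ_B ≤ γ_A`, where `G` carries the generating set consisting of `inl(t)` for
`t ∈ T` together with `inr(x)` and `inr(x)⁻¹` for `x ∈ X`. -/
theorem growthRate_le_of_freeProduct_factor
    {H X : Type*} [Group H] [Fintype X]
    (T : Set H) (hTfin : T.Finite) (hTsym : T⁻¹ = T) (hTgen : Subgroup.closure T = ⊤)
    (S : Set (Coprod H (FreeGroup X)))
    (hS : S = (⇑(Coprod.inl : H →* Coprod H (FreeGroup X)) '' T) ∪
        (⋃ x : X, {Coprod.inr (FreeGroup.of x), (Coprod.inr (FreeGroup.of x) :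
          Coprod H (FreeGroup X))⁻¹}))
    (A : Coprod H (FreeGroup X) →* Coprod H (FreeGroup X)) (B : H →* H)
    (hcomm : A.comp Coprod.inl = (Coprod.inl : H →* Coprod H (FreeGroup X)).comp B) :
    growthRate T B ≤ growthRate S A :=
  growthRate_le_of_freeProduct_factor_general T S hS A B hcomm
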